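/- arXiv:2510.25569 — 2 statements merged into one kernel-verified Lean document; each statement's English description precedes it below -/
import Mathlib

section
/- Let D be a probability distribution over X×Y and δ ∈ [0,1]. Suppose L̃_S^Q, b̃_S^Q and c̃_S^Q are such that: (1) with probability at least 1−δ over S~D^m, for all Q over H, E_{h'~Q} L_D(h') ≤ L̃_S^Q; (2) deterministically, for all Q over H and all h ∈ H, b_D^Q(h) ≥ b̃_S^Q and c_D^Q(h) ≥ c̃_S^Q; and (3) c̃_S^Q > b̃_S^Q. Then with probability at least 1−δ over S~D^m, simultaneously for all Q over H and all h ∈ H: L_D(h) ≤ (L̃_S^Q − b̃_S^Q)/(c̃_S^Q − b̃_S^Q). -/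
/-!
Because the loss is `{0,1}`-valued, conditioning on whether `h` errs splits the Gibbs risk as
`E_Q L_D = (1 - L_D(h)) b_D^Q(h) + L_D(h) c_D^Q(h)`. With `b ≥ b̃`, `c ≥ c̃` and `0 ≤ L_D(h) ≤ 1`
this gives `L̃ ≥ b̃ + L_D(h) (c̃ - b̃)` on the event of (1), so that event is contained in the
event of the conclusion.
-/

open MeasureTheory ProbabilityTheory
open scoped ENNReal

/-- The deterministic risk `L_D(h) = E_{(x,y)∼D} ℓ(h(x),y)`. -/
noncomputable def detRisk {X Y H : Type*} [MeasurableSpace X] [MeasurableSpace Y]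
    (D : Measure (X × Y)) (ℓ : H → X × Y → ℝ) (h : H) : ℝ :=
  ∫ z, ℓ h z ∂D

/-- The stochastic risk `E_{h'∼Q} L_D(h')`. -/
noncomputable def stochRisk {X Y H : Type*} [MeasurableSpace X] [MeasurableSpace Y]
    [MeasurableSpace H] (D : Measure (X × Y)) (Q : Measure H) (ℓ : H → X × Y → ℝ) : ℝ :=
  ∫ h', (∫ z, ℓ h' z ∂D) ∂Q

/-- `b_D^Q(h)`: the stochastic risk conditioned on `h`'s correct predictions. -/
noncomputable def bRisk {X Y H : Type*} [MeasurableSpace X] [MeasurableSpace Y]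
    [MeasurableSpace H] (D : Measure (X × Y)) (Q : Measure H) (ℓ : H → X × Y → ℝ) (h : H) : ℝ :=
  ∫ z, (∫ h', ℓ h' z ∂Q) ∂(D[|{z | ℓ h z = 0}])

/-- `c_D^Q(h)`: the stochastic risk conditioned on `h`'s incorrect predictions. -/
noncomputable def cRisk {X Y H : Type*} [MeasurableSpace X] [MeasurableSpace Y]
    [MeasurableSpace H] (D : Measure (X × Y)) (Q : Measure H) (ℓ : H → X × Y → ℝ) (h : H) : ℝ :=
  ∫ z, (∫ h', ℓ h' z ∂Q) ∂(D[|{z | ℓ h z = 1}])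

-- Holds also for `μ s = 0`, where `μ[|s] = 0`: no conditioning event needs positive mass.
lemma measureReal_mul_integral_cond {α E : Type*} [MeasurableSpace α] [NormedAddCommGroup E]
    [NormedSpace ℝ E] (μ : Measure α) [IsFiniteMeasure μ] (s : Set α) (f : α → E) :
    μ.real s • ∫ x, f x ∂μ[|s] = ∫ x in s, f x ∂μ := by
  by_cases hs : μ s = 0
  · simp [Measure.restrict_eq_zero.mpr hs, Measure.real, hs]
  · rw [ProbabilityTheory.cond, integral_smul_measure, smul_smul, ENNReal.toReal_inv,
      Measure.real, mul_inv_cancel₀ (ENNReal.toReal_ne_zero.mpr ⟨hs, measure_ne_top μ s⟩),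
      one_smul]

lemma integral_eq_cond_add_cond {α : Type*} [MeasurableSpace α] (μ : Measure α)
    [IsFiniteMeasure μ] {s : Set α} (hs : MeasurableSet s) {f : α → ℝ} (hf : Integrable f μ) :
    ∫ x, f x ∂μ = μ.real s * ∫ x, f x ∂μ[|s] + μ.real sᶜ * ∫ x, f x ∂μ[|sᶜ] := by
  simp_rw [← smul_eq_mul, measureReal_mul_integral_cond, integral_add_compl hs hf]

section ZeroOne

variable {α : Type*} {f : α → ℝ}

lemma abs_le_one_of_zero_or_one (hf : ∀ x, f x = 0 ∨ f x = 1) (x : α) : |f x| ≤ 1 := by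
  rcases hf x with h | h <;> simp [h]

lemma setOf_eq_one_eq_compl (hf : ∀ x, f x = 0 ∨ f x = 1) :
    {x | f x = 1} = {x | f x = 0}ᶜ := by
  ext x
  rcases hf x with h | h <;> simp [h]

lemma integral_eq_measureReal_of_zero_or_one [MeasurableSpace α] (μ : Measure α)
    (hf : ∀ x, f x = 0 ∨ f x = 1) (hfm : Measurable f) :
    ∫ x, f x ∂μ = μ.real {x | f x = 1} := by
  have hind : ∀ x, f x = {x | f x = 1}.indicator 1 x := fun x => by
    rcases hf x with h | h <;> simp [Set.indicator, h]
  rw [integral_congr_ae (ae_of_all μ hind)]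
  exact integral_indicator_one (hfm (measurableSet_singleton 1))

end ZeroOne

section Risks

variable {X Y H : Type*} [MeasurableSpace X] [MeasurableSpace Y] [MeasurableSpace H]
  (D : Measure (X × Y)) (Q : Measure H) {ℓ : H → X × Y → ℝ}

lemma detRisk_eq_measureReal (hbin : ∀ h' z, ℓ h' z = 0 ∨ ℓ h' z = 1)
    (hmeas : Measurable fun p : H × (X × Y) => ℓ p.1 p.2) (h : H) :
    detRisk D ℓ h = D.real {z | ℓ h z = 1} :=
  integral_eq_measureReal_of_zero_or_one D (hbin h) (hmeas.comp measurable_prodMk_left)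

variable [IsProbabilityMeasure D] [IsProbabilityMeasure Q]

lemma integrable_loss (hbin : ∀ h' z, ℓ h' z = 0 ∨ ℓ h' z = 1)
    (hmeas : Measurable fun p : H × (X × Y) => ℓ p.1 p.2) :
    Integrable (fun p : H × (X × Y) => ℓ p.1 p.2) (Q.prod D) :=
  .of_bound hmeas.aestronglyMeasurable 1
    (ae_of_all _ fun p => abs_le_one_of_zero_or_one (hbin p.1) p.2)

lemma stochRisk_eq_integral_integral (hbin : ∀ h' z, ℓ h' z = 0 ∨ ℓ h' z = 1)
    (hmeas : Measurable fun p : H × (X × Y) => ℓ p.1 p.2) :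
    stochRisk D Q ℓ = ∫ z, ∫ h', ℓ h' z ∂Q ∂D :=
  integral_integral_swap (integrable_loss D Q hbin hmeas)

lemma integrable_integral_loss (hbin : ∀ h' z, ℓ h' z = 0 ∨ ℓ h' z = 1)
    (hmeas : Measurable fun p : H × (X × Y) => ℓ p.1 p.2) :
    Integrable (fun z => ∫ h', ℓ h' z ∂Q) D :=
  (integrable_loss D Q hbin hmeas).swap.integral_prod_left

lemma stochRisk_eq_mix_bRisk_cRisk (hbin : ∀ h' z, ℓ h' z = 0 ∨ ℓ h' z = 1)
    (hmeas : Measurable fun p : H × (X × Y) => ℓ p.1 p.2) (h : H) :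
    stochRisk D Q ℓ = (1 - detRisk D ℓ h) * bRisk D Q ℓ h + detRisk D ℓ h * cRisk D Q ℓ h := by
  have hA : MeasurableSet {z | ℓ h z = 0} :=
    (hmeas.comp measurable_prodMk_left) (measurableSet_singleton 0)
  rw [stochRisk_eq_integral_integral D Q hbin hmeas,
    integral_eq_cond_add_cond D hA (integrable_integral_loss D Q hbin hmeas), bRisk, cRisk,
    detRisk_eq_measureReal D hbin hmeas, setOf_eq_one_eq_compl (hbin h),
    probReal_compl_eq_one_sub hA, sub_sub_cancel]

end Risks

lemma le_div_of_mix_le {L b c b' c' U : ℝ} (hL0 : 0 ≤ L) (hL1 : L ≤ 1) (hb : b' ≤ b)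
    (hc : c' ≤ c) (hbc : b' < c') (hU : (1 - L) * b + L * c ≤ U) :
    L ≤ (U - b') / (c' - b') := by
  rw [le_div_iff₀ (sub_pos.2 hbc)]
  linarith [mul_le_mul_of_nonneg_left hb (sub_nonneg.2 hL1), mul_le_mul_of_nonneg_left hc hL0]

theorem triple_bound_general
    {X Y H : Type*} [MeasurableSpace X] [MeasurableSpace Y] [MeasurableSpace H]
    (D : Measure (X × Y)) [IsProbabilityMeasure D]
    (ℓ : H → X × Y → ℝ)
    (hbin : ∀ h' z, ℓ h' z = 0 ∨ ℓ h' z = 1)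
    (hmeas : Measurable fun p : H × (X × Y) => ℓ p.1 p.2)
    (m : ℕ) (δ : ℝ)
    (Lt bt ct : (Fin m → X × Y) → Measure H → ℝ)
    (h1 : 1 - ENNReal.ofReal δ ≤ Measure.pi (fun _ : Fin m => D)
      {S | ∀ Q : Measure H, IsProbabilityMeasure Q → stochRisk D Q ℓ ≤ Lt S Q})
    (h2 : ∀ (S : Fin m → X × Y) (Q : Measure H), IsProbabilityMeasure Q → ∀ h : H,
      bt S Q ≤ bRisk D Q ℓ h ∧ ct S Q ≤ cRisk D Q ℓ h)
    (h3 : ∀ (S : Fin m → X × Y) (Q : Measure H), IsProbabilityMeasure Q → bt S Q < ct S Q) :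
    1 - ENNReal.ofReal δ ≤ Measure.pi (fun _ : Fin m => D)
      {S | ∀ Q : Measure H, IsProbabilityMeasure Q → ∀ h : H,
        detRisk D ℓ h ≤ (Lt S Q - bt S Q) / (ct S Q - bt S Q)} := by
  refine h1.trans (measure_mono fun S hS Q hQ h => ?_)
  have hL := detRisk_eq_measureReal D hbin hmeas h
  obtain ⟨hb, hc⟩ := h2 S Q hQ h
  refine le_div_of_mix_le (hL ▸ measureReal_nonneg) (hL ▸ measureReal_le_one) hb hc
    (h3 S Q hQ) ?_
  rw [← stochRisk_eq_mix_bRisk_cRisk D Q hbin hmeas h]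
  exact hS Q hQ

theorem triple_bound
    {X Y H : Type*} [MeasurableSpace X] [MeasurableSpace Y] [MeasurableSpace H]
    (D : Measure (X × Y)) [IsProbabilityMeasure D]
    (ℓ : H → X × Y → ℝ)
    (hbin : ∀ h' z, ℓ h' z = 0 ∨ ℓ h' z = 1)
    (hmeas : Measurable fun p : H × (X × Y) => ℓ p.1 p.2)
    (hpos : ∀ h : H, D {z | ℓ h z = 0} ≠ 0 ∧ D {z | ℓ h z = 1} ≠ 0)
    (hsandwich : ∀ (Q : Measure H), IsProbabilityMeasure Q → ∀ h : H,
      (bRisk D Q ℓ h ≤ stochRisk D Q ℓ ∧ stochRisk D Q ℓ ≤ cRisk D Q ℓ h) ∨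
      (cRisk D Q ℓ h ≤ stochRisk D Q ℓ ∧ stochRisk D Q ℓ ≤ bRisk D Q ℓ h))
    (m : ℕ) (δ : ℝ) (hδ0 : 0 ≤ δ) (hδ1 : δ ≤ 1)
    (Lt bt ct : (Fin m → X × Y) → Measure H → ℝ)
    (hA1meas : MeasurableSet {S : Fin m → X × Y |
      ∀ Q : Measure H, IsProbabilityMeasure Q → stochRisk D Q ℓ ≤ Lt S Q})
    (h1 : 1 - ENNReal.ofReal δ ≤ Measure.pi (fun _ : Fin m => D)
      {S | ∀ Q : Measure H, IsProbabilityMeasure Q → stochRisk D Q ℓ ≤ Lt S Q})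
    (h2 : ∀ (S : Fin m → X × Y) (Q : Measure H), IsProbabilityMeasure Q → ∀ h : H,
      bt S Q ≤ bRisk D Q ℓ h ∧ ct S Q ≤ cRisk D Q ℓ h)
    (h3 : ∀ (S : Fin m → X × Y) (Q : Measure H), IsProbabilityMeasure Q → bt S Q < ct S Q) :
    1 - ENNReal.ofReal δ ≤ Measure.pi (fun _ : Fin m => D)
      {S | ∀ Q : Measure H, IsProbabilityMeasure Q → ∀ h : H,
        detRisk D ℓ h ≤ (Lt S Q - bt S Q) / (ct S Q - bt S Q)} :=
  triple_bound_general D ℓ hbin hmeas m δ Lt bt ct h1 h2 h3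
end

section
/- Let Y = {−1, +1}, let f_1,...,f_n: X→{−1,+1} be base classifiers, let p ∈ R^n, and let N(p, I) be the n-dimensional Gaussian distribution with mean p and identity covariance. For any data distribution D over X×{−1,+1}: c_D^{N(p,I)}(h_p) = 1 − E_{(x,y)~D}[ Φ( |p·f(x)| / ||f(x)|| ) | y·(p·f(x)) ≤ 0 ] and b_D^{N(p,I)}(h_p) = E_{(x,y)~D}[ Φ( |p·f(x)| / ||f(x)|| ) | y·(p·f(x)) > 0 ], where Φ(k) = (1/2)(1 − erf(k/√2)). -/
/-!
STATEMENT 15 (Majority vote -- binary Gaussian S2D: the conditional stochastic risks).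
For base classifiers `f_i : X → {−1,+1}`, `p ∈ ℝ^n` and `N(p,I)` the Gaussian
with mean `p` and identity covariance, for any data distribution `D` over
`X × {−1,+1}`:
`c_D^{N(p,I)}(h_p) = 1 − E[Φ(|p·f(x)|/‖f(x)‖) | y·(p·f(x)) ≤ 0]` and
`b_D^{N(p,I)}(h_p) = E[Φ(|p·f(x)|/‖f(x)‖) | y·(p·f(x)) > 0]`,
where `Φ(k) = ½(1 − erf(k/√2))`.
-/

open MeasureTheory ProbabilityTheory
open scoped ENNReal

/-- Binary majority-vote loss `ℓ(h_w(x),y) = 1{y ≠ sign(w·f(x))}`. -/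
noncomputable def signLoss {X : Type*} {n : ℕ} (f : Fin n → X → ℝ)
    (w : Fin n → ℝ) (x : X) (y : ℝ) : ℝ :=
  if y * ∑ i, w i * f i x ≤ 0 then 1 else 0

/-- The Gaussian `N(p, I)` on `ℝ^n`. -/
noncomputable def gaussPi {n : ℕ} (p : Fin n → ℝ) : Measure (Fin n → ℝ) :=
  Measure.pi fun i => ProbabilityTheory.gaussianReal (p i) 1

/-- `erf(k) = (2/√π) ∫₀ᵏ e^{−t²} dt`. -/
noncomputable def erf (k : ℝ) : ℝ :=
  2 / Real.sqrt Real.pi * ∫ t in (0 : ℝ)..k, Real.exp (-t ^ 2)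

/-- `Φ(k) = ½(1 − erf(k/√2))`. -/
noncomputable def Phi (k : ℝ) : ℝ :=
  (1 - erf (k / Real.sqrt 2)) / 2

/-!
Under `N(p, I)` the margin `w ↦ y (w · f(x))` is a real Gaussian with mean
`y (p · f(x))` and variance `‖f(x)‖²`, since characteristic functions of independent
coordinates multiply. The stochastic loss at `(x, y)` is the probability that this Gaussian is
`≤ 0`, which after standardizing is the normal tail `Φ(y (p · f(x)) / ‖f(x)‖)`. On
`y (p · f(x)) > 0` this is `Φ(|p · f(x)| / ‖f(x)‖)`, and on `y (p · f(x)) ≤ 0` it is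
`1 - Φ(|p · f(x)| / ‖f(x)‖)` because `erf` is odd; integrating against the two conditional
distributions gives the two identities.
-/

open Real Set
open scoped NNReal

lemma integral_Ioi_exp_neg_sq (a : ℝ) :
    ∫ t in Ioi a, exp (-t ^ 2) = √π / 2 - ∫ t in (0 : ℝ)..a, exp (-t ^ 2) := by
  have hint : Integrable fun t : ℝ => exp (-t ^ 2) := by
    simpa using integrable_exp_neg_mul_sq (b := 1) one_pos
  have hhalf : ∫ t in Ioi (0 : ℝ), exp (-t ^ 2) = √π / 2 := by
    simpa using integral_gaussian_Ioi 1
  rw [← hhalf, ← intervalIntegral.integral_interval_add_Ioi (a := 0) (b := a) hint.integrableOn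
    hint.integrableOn]
  ring

lemma erf_neg (k : ℝ) : erf (-k) = -erf k := by
  have h := intervalIntegral.integral_comp_neg (a := 0) (b := k) fun t => exp (-t ^ 2)
  simp only [neg_sq, neg_zero] at h
  simp [erf, intervalIntegral.integral_symm 0 (-k), h]

lemma Phi_neg (k : ℝ) : Phi (-k) = 1 - Phi k := by
  simp only [Phi, neg_div, erf_neg]
  ring

lemma measureReal_Ici_gaussianReal_zero_one (k : ℝ) :
    (gaussianReal 0 1).real (Ici k) = Phi k := by
  have hpdf (x : ℝ) : gaussianPDFReal 0 1 x = (√(2 * π))⁻¹ * exp (-((√2)⁻¹ * x) ^ 2) := by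
    simp only [gaussianPDFReal, NNReal.coe_one, mul_one, sub_zero]
    rw [mul_pow, inv_pow, sq_sqrt zero_le_two]
    ring_nf
  rw [measureReal_def, gaussianReal_apply_eq_integral _ one_ne_zero, ENNReal.toReal_ofReal
    (setIntegral_nonneg measurableSet_Ici fun x _ => gaussianPDFReal_nonneg _ _ _),
    integral_Ici_eq_integral_Ioi]
  simp_rw [hpdf]
  rw [integral_const_mul, integral_comp_mul_left_Ioi (fun t => exp (-t ^ 2)) k (by positivity),
    integral_Ioi_exp_neg_sq, Phi, erf, sqrt_mul zero_le_two, inv_inv, smul_eq_mul]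
  field_simp

lemma measureReal_Iic_zero_gaussianReal (m : ℝ) {v : ℝ≥0} (hv : v ≠ 0) :
    (gaussianReal m v).real (Iic 0) = Phi (m / √v) := by
  have hs : 0 < √(v : ℝ) := sqrt_pos.2 (by positivity)
  have hstd : (gaussianReal m v).map (fun x => (m - x) / √v) = gaussianReal 0 1 := by
    rw [show (fun x => (m - x) / √v) = (· / √v) ∘ (m - ·) from rfl,
      ← Measure.map_map (by fun_prop) (by fun_prop), gaussianReal_map_const_sub,
      gaussianReal_map_div_const, sub_self, zero_div]
    congr
    ext
    simp [sq_sqrt, hv]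
  have hpre : (fun x => (m - x) / √v) ⁻¹' Ici (m / √v) = Iic 0 := by
    ext x
    simp [div_le_div_iff_of_pos_right hs]
  rw [← hpre, ← map_measureReal_apply (by fun_prop) measurableSet_Ici, hstd,
    measureReal_Ici_gaussianReal_zero_one]

lemma Phi_mem_Icc (k : ℝ) : Phi k ∈ Icc 0 1 := by
  rw [← measureReal_Ici_gaussianReal_zero_one]
  exact ⟨measureReal_nonneg, measureReal_le_one⟩

lemma antitone_Phi : Antitone Phi := fun a b hab => by
  simp only [← measureReal_Ici_gaussianReal_zero_one]
  exact measureReal_mono (Ici_subset_Ici.2 hab)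

lemma integrable_Phi_comp {Ω : Type*} [MeasurableSpace Ω] {μ : Measure Ω} [IsFiniteMeasure μ]
    {g : Ω → ℝ} (hg : Measurable g) : Integrable (fun z => Phi (g z)) μ := by
  refine .of_bound (antitone_Phi.measurable.comp hg).aestronglyMeasurable 1
    (ae_of_all _ fun z => ?_)
  obtain ⟨h0, h1⟩ := Phi_mem_Icc (g z)
  rw [norm_eq_abs, abs_of_nonneg h0]
  exact h1

lemma map_sum_pi_gaussianReal {ι : Type*} [Fintype ι] (m : ι → ℝ) (v : ι → ℝ≥0) :
    (Measure.pi fun i => gaussianReal (m i) (v i)).map (fun w => ∑ i, w i)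
      = gaussianReal (∑ i, m i) (∑ i, v i) := by
  refine Measure.ext_of_charFun (funext fun t => ?_)
  rw [charFun_map_sum_pi_eq_prod, Finset.prod_apply]
  simp_rw [charFun_gaussianReal, ← Complex.exp_sum]
  push_cast
  congr 1
  simp only [Finset.sum_sub_distrib, Finset.mul_sum, Finset.sum_mul, Finset.sum_div]

lemma map_weightedSum_pi_gaussianReal {ι : Type*} [Fintype ι] (c m : ι → ℝ) (v : ι → ℝ≥0) :
    (Measure.pi fun i => gaussianReal (m i) (v i)).map (fun w => ∑ i, c i * w i)
      = gaussianReal (∑ i, c i * m i) (∑ i, ‖c i‖₊ ^ 2 * v i) := by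
  rw [show (fun w : ι → ℝ => ∑ i, c i * w i) = (fun w => ∑ i, w i) ∘ (fun w i => c i * w i)
      from rfl, ← Measure.map_map (by fun_prop) (by fun_prop),
    Measure.pi_map_pi (fun i => by fun_prop)]
  simp_rw [gaussianReal_map_const_mul]
  rw [map_sum_pi_gaussianReal]
  congr
  ext
  simp

lemma integral_cond_congr {Ω E : Type*} [MeasurableSpace Ω] [NormedAddCommGroup E]
    [NormedSpace ℝ E] {μ : Measure Ω} {s : Set Ω} (hs : MeasurableSet s) {F G : Ω → E}
    (h : ∀ᵐ z ∂μ, z ∈ s → F z = G z) : ∫ z, F z ∂μ[|s] = ∫ z, G z ∂μ[|s] :=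
  integral_congr_ae <| by
    filter_upwards [ae_cond_mem hs, cond_absolutelyContinuous.ae_le h] with z hz hFG
    exact hFG hz

section SignLoss

variable {X : Type*} {n : ℕ} (f : Fin n → X → ℝ)

lemma signLoss_eq_one_iff (w : Fin n → ℝ) (x : X) (y : ℝ) :
    signLoss f w x y = 1 ↔ y * ∑ i, w i * f i x ≤ 0 := by
  unfold signLoss
  split_ifs <;> simp_all

lemma signLoss_eq_zero_iff (w : Fin n → ℝ) (x : X) (y : ℝ) :
    signLoss f w x y = 0 ↔ 0 < y * ∑ i, w i * f i x := by
  unfold signLoss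
  split_ifs <;> simp_all

variable (p : Fin n → ℝ) (x : X) {y : ℝ}

lemma integral_signLoss_gaussPi (hy : |y| = 1) (hf : ∑ i, f i x ^ 2 ≠ 0) :
    ∫ w, signLoss f w x y ∂(gaussPi p) = Phi (y * (∑ i, p i * f i x) / √(∑ i, f i x ^ 2)) := by
  set c : Fin n → ℝ := fun i => y * f i x
  have hmargin (w : Fin n → ℝ) : y * ∑ i, w i * f i x = ∑ i, c i * w i := by
    rw [Finset.mul_sum]
    exact Finset.sum_congr rfl fun i _ => by ring
  have hloss : (fun w => signLoss f w x y)
      = ((fun w => ∑ i, c i * w i) ⁻¹' Iic 0).indicator 1 := by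
    classical
    ext w
    rw [Set.indicator_apply]
    simp only [signLoss, hmargin, Set.mem_preimage, Set.mem_Iic, Pi.one_apply]
  set V : ℝ≥0 := ∑ i, ‖c i‖₊ ^ 2 * 1
  have hV : (V : ℝ) = ∑ i, f i x ^ 2 := by
    have hy2 : y ^ 2 = 1 := by rw [← sq_abs, hy, one_pow]
    simp [V, c, mul_pow, hy2]
  have hV0 : V ≠ 0 := fun h => hf (by rw [← hV, h, NNReal.coe_zero])
  rw [hloss, integral_indicator_one (measurableSet_Iic.preimage (by fun_prop)),
    ← map_measureReal_apply (by fun_prop) measurableSet_Iic, gaussPi,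
    map_weightedSum_pi_gaussianReal, measureReal_Iic_zero_gaussianReal _ hV0, hV, ← hmargin]

lemma integral_signLoss_gaussPi_of_pos (hy : |y| = 1) (hf : ∑ i, f i x ^ 2 ≠ 0)
    (h : 0 < y * ∑ i, p i * f i x) :
    ∫ w, signLoss f w x y ∂(gaussPi p) = Phi (|∑ i, p i * f i x| / √(∑ i, f i x ^ 2)) := by
  rw [integral_signLoss_gaussPi f p x hy hf, ← abs_of_pos h, abs_mul, hy, one_mul]

lemma integral_signLoss_gaussPi_of_nonpos (hy : |y| = 1) (hf : ∑ i, f i x ^ 2 ≠ 0)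
    (h : y * ∑ i, p i * f i x ≤ 0) :
    ∫ w, signLoss f w x y ∂(gaussPi p) = 1 - Phi (|∑ i, p i * f i x| / √(∑ i, f i x ^ 2)) := by
  have habs : |∑ i, p i * f i x| = -(y * ∑ i, p i * f i x) := by
    rw [← abs_of_nonpos h, abs_mul, hy, one_mul]
  rw [integral_signLoss_gaussPi f p x hy hf, habs, neg_div, Phi_neg, sub_sub_cancel]

end SignLoss

theorem binary_gaussian_s2d_conditional_risks_general
    {X : Type*} [MeasurableSpace X]
    {n : ℕ} (hn : 0 < n) (f : Fin n → X → ℝ)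
    (hf : ∀ i x, f i x = 1 ∨ f i x = -1)
    (hfm : ∀ i, Measurable (f i))
    (p : Fin n → ℝ)
    (D : Measure (X × ℝ)) [IsProbabilityMeasure D]
    (hD : ∀ᵐ z ∂D, z.2 = 1 ∨ z.2 = -1)
    (hpos1 : D {z | signLoss f p z.1 z.2 = 1} ≠ 0) :
    -- c_D^{N(p,I)}(h_p) = 1 − E[Φ(|p·f(x)|/‖f(x)‖) | y·(p·f(x)) ≤ 0]
    (∫ z, (∫ w, signLoss f w z.1 z.2 ∂(gaussPi p))
        ∂(D[|{z | signLoss f p z.1 z.2 = 1}]))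
      = 1 - (∫ z, Phi (|∑ i, p i * f i z.1| / Real.sqrt (∑ i, f i z.1 ^ 2))
          ∂(D[|{z | z.2 * ∑ i, p i * f i z.1 ≤ 0}])) ∧
    -- b_D^{N(p,I)}(h_p) = E[Φ(|p·f(x)|/‖f(x)‖) | y·(p·f(x)) > 0]
    (∫ z, (∫ w, signLoss f w z.1 z.2 ∂(gaussPi p))
        ∂(D[|{z | signLoss f p z.1 z.2 = 0}]))
      = (∫ z, Phi (|∑ i, p i * f i z.1| / Real.sqrt (∑ i, f i z.1 ^ 2))
          ∂(D[|{z | 0 < z.2 * ∑ i, p i * f i z.1}])) := by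
  have hnorm (x : X) : ∑ i, f i x ^ 2 ≠ 0 := by
    have hsq (i : Fin n) : f i x ^ 2 = 1 := by rcases hf i x with h | h <;> simp [h]
    simp [hsq, hn.ne']
  have hmargin : Measurable fun z : X × ℝ => z.2 * ∑ i, p i * f i z.1 := by fun_prop
  have hy : ∀ᵐ z ∂D, |z.2| = 1 := hD.mono fun z hz => (abs_eq zero_le_one).2 hz
  simp only [signLoss_eq_one_iff, signLoss_eq_zero_iff] at hpos1 ⊢
  have := cond_isProbabilityMeasure hpos1
  constructor
  · rw [integral_cond_congr (measurableSet_le hmargin measurable_const)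
        (G := fun z => 1 - Phi (|∑ i, p i * f i z.1| / √(∑ i, f i z.1 ^ 2))),
      integral_sub (integrable_const 1) (integrable_Phi_comp (by fun_prop)), integral_const,
      probReal_univ, one_smul]
    filter_upwards [hy] with z hz hneg
    exact integral_signLoss_gaussPi_of_nonpos f p z.1 hz (hnorm z.1) hneg
  · refine integral_cond_congr (measurableSet_lt measurable_const hmargin) ?_
    filter_upwards [hy] with z hz hpos
    exact integral_signLoss_gaussPi_of_pos f p z.1 hz (hnorm z.1) hpos

theorem binary_gaussian_s2d_conditional_risks
    {X : Type*} [MeasurableSpace X]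
    {n : ℕ} (hn : 0 < n) (f : Fin n → X → ℝ)
    (hf : ∀ i x, f i x = 1 ∨ f i x = -1)
    (hfm : ∀ i, Measurable (f i))
    (p : Fin n → ℝ)
    (D : Measure (X × ℝ)) [IsProbabilityMeasure D]
    (hD : ∀ᵐ z ∂D, z.2 = 1 ∨ z.2 = -1)
    (hpos0 : D {z | signLoss f p z.1 z.2 = 0} ≠ 0)
    (hpos1 : D {z | signLoss f p z.1 z.2 = 1} ≠ 0) :
    -- c_D^{N(p,I)}(h_p) = 1 − E[Φ(|p·f(x)|/‖f(x)‖) | y·(p·f(x)) ≤ 0]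
    (∫ z, (∫ w, signLoss f w z.1 z.2 ∂(gaussPi p))
        ∂(D[|{z | signLoss f p z.1 z.2 = 1}]))
      = 1 - (∫ z, Phi (|∑ i, p i * f i z.1| / Real.sqrt (∑ i, f i z.1 ^ 2))
          ∂(D[|{z | z.2 * ∑ i, p i * f i z.1 ≤ 0}])) ∧
    -- b_D^{N(p,I)}(h_p) = E[Φ(|p·f(x)|/‖f(x)‖) | y·(p·f(x)) > 0]
    (∫ z, (∫ w, signLoss f w z.1 z.2 ∂(gaussPi p))
        ∂(D[|{z | signLoss f p z.1 z.2 = 0}]))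
      = (∫ z, Phi (|∑ i, p i * f i z.1| / Real.sqrt (∑ i, f i z.1 ^ 2))
          ∂(D[|{z | 0 < z.2 * ∑ i, p i * f i z.1}])) :=
  binary_gaussian_s2d_conditional_risks_general hn f hf hfm p D hD hpos1
end
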